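/- Let C be a k-dimensional ZMod 2-linear subspace of (Fin n → ZMod 2) with weight distribution (A_i)_{i=0}^{n}, and let C⊥ = {x : ∀ c ∈ C, Σ_i x i · c i = 0} be its dual code. Then for every real p with 0 ≤ p ≤ 1, the probability under n i.i.d. Bernoulli(p) bits that the random vector lies in C⊥ satisfies Σ_{x ∈ C⊥} p^{wt(x)} (1 − p)^{n − wt(x)} = 2^{−k} · Σ_{i=0}^{n} A_i · (1 − 2p)^i. -/
import Mathlib

noncomputable def chiZ (a : ZMod 2) : ℝ := if a = 0 then 1 else -1

lemma chiZ_zero : chiZ 0 = 1 := by simp [chiZ]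

lemma chiZ_add (a b : ZMod 2) : chiZ (a + b) = chiZ a * chiZ b := by
  have h : ∀ a : ZMod 2, a = 0 ∨ a = 1 := by decide
  have h2 : (1 + 1 : ZMod 2) = 0 := by decide
  rcases h a with ha | ha <;> rcases h b with hb | hb <;>
    subst ha <;> subst hb <;> simp [chiZ, h2]

lemma chiZ_sum {ι : Type*} (s : Finset ι) (f : ι → ZMod 2) :
    chiZ (∑ i ∈ s, f i) = ∏ i ∈ s, chiZ (f i) := by
  induction s using Finset.cons_induction with
  | empty => simp [chiZ_zero]
  | cons a s ha ih => simp [Finset.sum_cons, Finset.prod_cons, chiZ_add, ih]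



open Classical in
/-- Probability of a set of bit-vectors under `n` independent identically distributed bits,
each equal to `1` with probability `p`. -/
noncomputable def probIID {n : ℕ} (p : ℝ) (S : Set (Fin n → ZMod 2)) : ℝ :=
  ∑ x : Fin n → ZMod 2,
    if x ∈ S then p ^ hammingNorm x * (1 - p) ^ (n - hammingNorm x) else 0

/-- MacWilliams-type identity for the probability of the dual code: under
`n` i.i.d. Bernoulli(`p`) bits, the probability that the random vector lies in the dual
code `C⊥` equals `2 ^ (-k) * ∑ i, A i * (1 - 2p) ^ i`, where `(A i)` is the weight
distribution of the `k`-dimensional code `C`. -/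
theorem dual_code_prob_eq_weight_enumerator {n k : ℕ}
    (C : Submodule (ZMod 2) (Fin n → ZMod 2))
    (hk : Module.finrank (ZMod 2) C = k)
    (A : ℕ → ℕ)
    (hA : ∀ i, A i = Nat.card {c : Fin n → ZMod 2 // c ∈ C ∧ hammingNorm c = i})
    (p : ℝ) (hp0 : 0 ≤ p) (hp1 : p ≤ 1) :
    probIID p {x : Fin n → ZMod 2 | ∀ c ∈ C, ∑ i, x i * c i = 0} =
      (2 : ℝ) ^ (-(k : ℝ)) *
        ∑ i ∈ Finset.range (n + 1), (A i : ℝ) * (1 - 2 * p) ^ i := by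
  classical
  haveI : Fintype C := Fintype.ofFinite _
  set S : Set (Fin n → ZMod 2) := {x | ∀ c ∈ C, ∑ i, x i * c i = 0} with hS
  -- weight as product
  have hw : ∀ x : Fin n → ZMod 2,
      p ^ hammingNorm x * (1 - p) ^ (n - hammingNorm x)
        = ∏ i, (if x i = 0 then (1 - p) else p) := by
    intro x
    rw [Finset.prod_ite, Finset.prod_const, Finset.prod_const]
    have h1 : (Finset.univ.filter fun i => ¬ x i = 0).card = hammingNorm x := by
      simp [hammingNorm]
    have h2 : (Finset.univ.filter fun i => x i = 0).card = n - hammingNorm x := by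
      have := Finset.card_filter_add_card_filter_not
        (s := (Finset.univ : Finset (Fin n))) (p := fun i => x i = 0)
      simp only [Finset.card_univ, Fintype.card_fin] at this
      omega
    rw [h1, h2, mul_comm]
  -- inner sum over all x
  have hB : ∀ c : Fin n → ZMod 2,
      (∑ x : Fin n → ZMod 2, chiZ (∑ i, x i * c i)
          * (p ^ hammingNorm x * (1 - p) ^ (n - hammingNorm x)))
        = (1 - 2 * p) ^ hammingNorm c := by
    intro c
    have step : ∀ x : Fin n → ZMod 2,
        chiZ (∑ i, x i * c i) * (p ^ hammingNorm x * (1 - p) ^ (n - hammingNorm x))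
          = ∏ i, (chiZ (x i * c i) * (if x i = 0 then (1 - p) else p)) := by
      intro x
      rw [hw x, chiZ_sum, ← Finset.prod_mul_distrib]
    rw [Finset.sum_congr rfl (fun x _ => step x)]
    rw [show (∑ x : Fin n → ZMod 2, ∏ i, (chiZ (x i * c i) * (if x i = 0 then (1 - p) else p)))
        = ∏ i, ∑ b : ZMod 2, (chiZ (b * c i) * (if b = 0 then (1 - p) else p)) from
      (Fintype.prod_sum fun i b => chiZ (b * c i) * (if b = 0 then (1 - p) else p)).symm]
    have hsum : ∀ i, (∑ b : ZMod 2, chiZ (b * c i) * (if b = 0 then (1 - p) else p))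
        = if c i = 0 then 1 else (1 - 2 * p) := by
      intro i
      rw [show (Finset.univ : Finset (ZMod 2)) = {0, 1} by decide,
        Finset.sum_insert (by decide), Finset.sum_singleton]
      by_cases h : c i = 0 <;> simp [h, chiZ] <;> ring
    rw [Finset.prod_congr rfl (fun i _ => hsum i), Finset.prod_ite,
      Finset.prod_const, Finset.prod_const, one_pow, one_mul]
    congr 1
  -- cardinality of C
  have hcardC : (Fintype.card C : ℝ) = 2 ^ k := by
    have h := Module.card_eq_pow_finrank (K := ZMod 2) (V := C)
    rw [ZMod.card, hk] at h
    rw [h]; push_cast; ring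
  -- character sum over C
  have hC : ∀ x : Fin n → ZMod 2,
      (∑ c : C, chiZ (∑ i, x i * (c : Fin n → ZMod 2) i))
        = if x ∈ S then (2 : ℝ) ^ k else 0 := by
    intro x
    by_cases hx : x ∈ S
    · rw [if_pos hx]
      have h1 : ∀ c : C, chiZ (∑ i, x i * (c : Fin n → ZMod 2) i) = 1 := by
        intro c; rw [hx c.1 c.2, chiZ_zero]
      rw [Finset.sum_congr rfl (fun c _ => h1 c), Finset.sum_const, Finset.card_univ,
        nsmul_eq_mul, mul_one, hcardC]
    · rw [if_neg hx]
      have hx' : ∃ c0 ∈ C, (∑ i, x i * c0 i) ≠ 0 := by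
        by_contra h; push_neg at h; exact hx h
      obtain ⟨c0, hc0C, hc0⟩ := hx'
      have hc01 : (∑ i, x i * c0 i) = 1 := by
        have hh : ∀ a : ZMod 2, a ≠ 0 → a = 1 := by decide
        exact hh _ hc0
      set f : C → ℝ := fun c => chiZ (∑ i, x i * (c : Fin n → ZMod 2) i) with hf
      have key : ∀ c : C, f ((⟨c0, hc0C⟩ : C) + c) = - f c := by
        intro c
        have hcoe : ∀ i, (((⟨c0, hc0C⟩ : C) + c : C) : Fin n → ZMod 2) i
            = c0 i + (c : Fin n → ZMod 2) i := fun i => rfl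
        simp only [hf]
        rw [Finset.sum_congr rfl (fun i _ => by rw [hcoe i, mul_add]),
          Finset.sum_add_distrib, chiZ_add, hc01]
        simp only [chiZ, if_neg (one_ne_zero (α := ZMod 2))]
        split <;> norm_num
      have h1 : ∑ c : C, f ((⟨c0, hc0C⟩ : C) + c) = ∑ c : C, f c :=
        Fintype.sum_equiv (Equiv.addLeft (⟨c0, hc0C⟩ : C)) _ f (fun c => rfl)
      rw [Finset.sum_congr rfl (fun c _ => key c), Finset.sum_neg_distrib] at h1
      linarith
  -- 2^{-k} * 2^k = 1
  have h2k : (2 : ℝ) ^ (-(k : ℝ)) * (2 : ℝ) ^ k = 1 := by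
    rw [show ((2:ℝ) ^ k) = (2:ℝ) ^ (k : ℝ) by rw [Real.rpow_natCast],
      ← Real.rpow_add (by norm_num)]
    simp
  -- grouping by weight
  have hgroup : (∑ c : C, (1 - 2 * p) ^ hammingNorm (c : Fin n → ZMod 2))
      = ∑ i ∈ Finset.range (n + 1), (A i : ℝ) * (1 - 2 * p) ^ i := by
    have hmaps : ∀ c : C, c ∈ (Finset.univ : Finset C) →
        hammingNorm (c : Fin n → ZMod 2) ∈ Finset.range (n + 1) := by
      intro c _
      rw [Finset.mem_range, Nat.lt_succ_iff]
      calc hammingNorm (c : Fin n → ZMod 2) ≤ Fintype.card (Fin n) :=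
            Finset.card_filter_le _ _
        _ = n := Fintype.card_fin n
    rw [← Finset.sum_fiberwise_of_maps_to hmaps
      (fun c : C => (1 - 2 * p) ^ hammingNorm (c : Fin n → ZMod 2))]
    refine Finset.sum_congr rfl (fun i _ => ?_)
    rw [Finset.sum_congr rfl (fun c hc => by rw [(Finset.mem_filter.mp hc).2]),
      Finset.sum_const, nsmul_eq_mul]
    congr 1
    rw [hA i]
    have e : {c : Fin n → ZMod 2 // c ∈ C ∧ hammingNorm c = i}
        ≃ {c : C // hammingNorm (c : Fin n → ZMod 2) = i} :=
      ⟨fun ⟨c, hc, h⟩ => ⟨⟨c, hc⟩, h⟩, fun ⟨⟨c, hc⟩, h⟩ => ⟨c, hc, h⟩,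
        fun ⟨c, hc, h⟩ => rfl, fun ⟨⟨c, hc⟩, h⟩ => rfl⟩
    rw [Nat.card_congr e, Nat.card_eq_fintype_card, Fintype.card_subtype]
  -- put everything together
  unfold probIID
  rw [← hgroup]
  rw [show (∑ c : C, (1 - 2 * p) ^ hammingNorm (c : Fin n → ZMod 2))
      = ∑ c : C, ∑ x : Fin n → ZMod 2, chiZ (∑ i, x i * (c : Fin n → ZMod 2) i)
          * (p ^ hammingNorm x * (1 - p) ^ (n - hammingNorm x)) from
    Finset.sum_congr rfl fun c _ => (hB (c : Fin n → ZMod 2)).symm]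
  rw [Finset.sum_comm, Finset.mul_sum]
  refine Finset.sum_congr rfl fun x _ => ?_
  rw [← Finset.sum_mul, hC x]
  by_cases hx : x ∈ S
  · rw [if_pos hx, if_pos hx, ← mul_assoc, h2k, one_mul]
  · rw [if_neg hx, if_neg hx, zero_mul, mul_zero]
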